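/- arXiv:1610.01111 — 9 statements merged into one kernel-verified Lean document; each statement's English description precedes it below -/
import Mathlib

section
/- Let M = (m1 m2 m3 m4) ∈ Z^{1×4} be translation invariant with m2 + m4 > 0, let p ∈ Z, and let q ≥ max{2, p} be an integer. Then any two distinct edges whose endpoints are powers of q (i.e., endpoints in {q^i : i ≥ 1}) are conflicting with respect to M and p. -/
/-- If `M = (m1 m2 m3 m4)` is translation invariant with `m2 + m4 > 0` and
`q ≥ max 2 p`, then any two distinct edges with endpoints powers of `q`
are conflicting with respect to `M` and `p`. -/
theorem stmt3 (m1 m2 m3 m4 p q : ℤ) (hM : m1 + m2 + m3 + m4 = 0)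
    (h24 : 0 < m2 + m4) (hq : q ≥ max 2 p)
    (i s j t : ℕ) (hi : 1 ≤ i) (hj : 1 ≤ j) (his : i < s) (hjt : j < t)
    (hne : (i, s) ≠ (j, t)) :
    m1 * q ^ i + m2 * q ^ s + m3 * q ^ j + m4 * q ^ t ≥ p ∨
    m1 * q ^ j + m2 * q ^ t + m3 * q ^ i + m4 * q ^ s ≥ p := by
  by_contra h
  push_neg at h
  obtain ⟨h1, h2⟩ := h
  have hq2 : (2 : ℤ) ≤ q := le_trans (le_max_left _ _) hq
  have hqp : p ≤ q := le_trans (le_max_right _ _) hq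
  have hq1 : (1 : ℤ) ≤ q := by linarith
  have hsi : q ^ (i + 1) ≤ q ^ s := pow_le_pow_right₀ hq1 his
  have htj : q ^ (j + 1) ≤ q ^ t := pow_le_pow_right₀ hq1 hjt
  have hqi : q ^ 1 ≤ q ^ i := pow_le_pow_right₀ hq1 hi
  have hqj : q ^ 1 ≤ q ^ j := pow_le_pow_right₀ hq1 hj
  rw [pow_one] at hqi hqj
  rw [pow_succ] at hsi htj
  have key : (m1 * q ^ i + m2 * q ^ s + m3 * q ^ j + m4 * q ^ t) +
      (m1 * q ^ j + m2 * q ^ t + m3 * q ^ i + m4 * q ^ s) =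
      (m2 + m4) * ((q ^ s - q ^ i) + (q ^ t - q ^ j)) := by
    linear_combination (q ^ i + q ^ j) * hM
  have hA : q ≤ q ^ s - q ^ i := by nlinarith
  have hB : q ≤ q ^ t - q ^ j := by nlinarith
  nlinarith [mul_le_mul h24.le (add_le_add hA hB) (by linarith : (0:ℤ) ≤ q + q) h24.le]
end

section
/- Let k and q be positive integers with k > q, and let G be a finite graph on a subset of Z with chromatic number at least k. Then G contains at least binom(k-q+1, 2) edges (u,v) with v - u ≥ q. -/
/-!
Fewer than `binom(d+1, 2)` edges of length at least `q` force a proper colouring with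
`q - 1 + d` colours; for `d = k - q` that is fewer than `k` colours. The proof is by induction on
the vertex set, removing its largest vertex `v`. If `v` is the right end of at least `d` long
edges, the rest has fewer than `binom(d, 2)` long edges, so it is `(q - 2 + d)`-colourable and `v`
gets a new colour. Otherwise all neighbours of `v` lie to its left: fewer than `d` of them at
distance at least `q` and at most `q - 1` closer, so one of the `q - 1 + d` colours is free at `v`.
-/

namespace SimpleGraph

variable {V : Type*} {G : SimpleGraph V}

theorem support_finite_of_edgeSet_finite (h : G.edgeSet.Finite) : G.support.Finite := by
  classical
  refine (h.toFinset.biUnion Sym2.toFinset).finite_toSet.subset fun u ⟨w, huw⟩ => ?_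
  simp only [Finset.coe_biUnion, Set.mem_iUnion, Finset.mem_coe, Set.Finite.mem_toFinset]
  exact ⟨s(u, w), huw, Sym2.mem_toFinset.2 (Sym2.mem_mk_left u w)⟩

theorem nonempty_coloring_of_deleteIncidenceSet {β : Type*} {v : V}
    (C : (G.deleteIncidenceSet v).Coloring β) {b : β} (hb : b ∉ C '' G.neighborSet v) :
    Nonempty (G.Coloring β) := by
  classical
  refine ⟨Coloring.mk (Function.update C v b) fun {x y} hxy => ?_⟩
  have hb' : ∀ w, G.Adj v w → C w ≠ b := fun w hw h => hb ⟨w, hw, h⟩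
  rcases eq_or_ne x v with rfl | hx
  · simpa [hxy.ne'] using (hb' y hxy).symm
  rcases eq_or_ne y v with rfl | hy
  · simpa [hx] using hb' x hxy.symm
  · simpa [hx, hy] using C.valid (deleteIncidenceSet_adj.2 ⟨hxy, hx, hy⟩)

theorem Colorable.of_deleteIncidenceSet_of_encard_neighborSet_lt {v : V} {n : ℕ}
    (h : (G.deleteIncidenceSet v).Colorable n) (hv : (G.neighborSet v).encard < n) :
    G.Colorable n := by
  obtain ⟨C⟩ := h
  obtain ⟨b, hb⟩ : (C '' G.neighborSet v)ᶜ.Nonempty := by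
    rw [Set.nonempty_compl]
    rintro himage
    have := (Set.encard_image_le C _).trans_lt hv
    simp [himage] at this
  exact nonempty_coloring_of_deleteIncidenceSet C hb

theorem Colorable.succ_of_deleteIncidenceSet {v : V} {n : ℕ}
    (h : (G.deleteIncidenceSet v).Colorable n) : G.Colorable (n + 1) := by
  obtain ⟨C⟩ := h
  refine nonempty_coloring_of_deleteIncidenceSet
    ((Embedding.completeGraph Fin.castSuccEmb).toHom.comp C) (b := Fin.last n) ?_
  rintro ⟨w, -, hw⟩
  exact Fin.castSucc_ne_last _ hw

def longEdges (G : SimpleGraph ℤ) (q : ℕ) : Set (ℤ × ℤ) :=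
  {e | e.1 < e.2 ∧ G.Adj e.1 e.2 ∧ (q : ℤ) ≤ e.2 - e.1}

section Integers

variable {G : SimpleGraph ℤ} {v : ℤ} (q : ℕ)

theorem encard_longEdges_of_forall_adj_lt (hv : ∀ u, G.Adj u v → u < v) :
    (G.longEdges q).encard = ((G.deleteIncidenceSet v).longEdges q).encard +
      {u | G.Adj u v ∧ (q : ℤ) ≤ v - u}.encard := by
  have hinj : Set.InjOn (fun u => (u, v)) {u | G.Adj u v ∧ (q : ℤ) ≤ v - u} :=
    fun _ _ _ _ h => (Prod.mk.inj h).1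
  rw [← hinj.encard_image, ← Set.encard_union_eq]
  · congr 1
    ext ⟨a, b⟩
    simp only [longEdges, Set.mem_union, Set.mem_ofPred_eq, Set.mem_image, Prod.mk.injEq,
      deleteIncidenceSet_adj]
    constructor
    · rintro ⟨hab, hadj, hlen⟩
      by_cases hb : b = v
      · subst hb
        exact Or.inr ⟨a, ⟨hadj, hlen⟩, rfl, rfl⟩
      · refine Or.inl ⟨hab, ⟨hadj, fun ha => ?_, hb⟩, hlen⟩
        have := hv b (ha ▸ hadj).symm
        omega
    · rintro (⟨hab, ⟨hadj, -, -⟩, hlen⟩ | ⟨u, ⟨hadj, hlen⟩, rfl, rfl⟩)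
      · exact ⟨hab, hadj, hlen⟩
      · exact ⟨hv u hadj, hadj, hlen⟩
  · rw [Set.disjoint_left]
    rintro _ ⟨-, hadj, -⟩ ⟨u, -, rfl⟩
    exact (deleteIncidenceSet_adj.1 hadj).2.2 rfl

theorem encard_neighborSet_le_of_forall_adj_lt (hv : ∀ u, G.Adj u v → u < v) :
    (G.neighborSet v).encard ≤
      {u | G.Adj u v ∧ (q : ℤ) ≤ v - u}.encard + (q - 1 : ℕ) := by
  have hsub : G.neighborSet v ⊆
      {u | G.Adj u v ∧ (q : ℤ) ≤ v - u} ∪ ↑(Finset.Ioo (v - q) v) := by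
    intro u hu
    have hlt := hv u (G.adj_symm hu)
    by_cases hlen : (q : ℤ) ≤ v - u
    · exact Or.inl ⟨G.adj_symm hu, hlen⟩
    · exact Or.inr (Finset.mem_coe.2 (Finset.mem_Ioo.2 ⟨by omega, hlt⟩))
  refine (Set.encard_le_encard hsub).trans ((Set.encard_union_le _ _).trans ?_)
  rw [Set.encard_coe_eq_coe_finsetCard, Int.card_Ioo]
  gcongr
  norm_cast
  omega

theorem colorable_of_encard_longEdges_lt {d : ℕ} (V : Finset ℤ) (hV : G.support ⊆ V)
    (h : (G.longEdges q).encard < (d + 1).choose 2) : G.Colorable (q - 1 + d) := by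
  induction V using Finset.induction_on_max generalizing G d with
  | empty =>
    have hd : d ≠ 0 := by rintro rfl; simp at h
    exact ⟨Coloring.mk (fun _ => ⟨0, by omega⟩)
      fun huv => absurd (hV huv.mem_support_left) (by simp)⟩
  | insert v s hs ih =>
    rcases d with _ | d
    · simp at h
    have hv : ∀ u, G.Adj u v → u < v := fun u huv =>
      hs u ((Finset.mem_insert.1 (hV huv.mem_support_left)).resolve_left huv.ne)
    have hV' : (G.deleteIncidenceSet v).support ⊆ s := fun u hu => by
      obtain ⟨hu, huv⟩ := G.support_deleteIncidenceSet_subset v hu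
      exact (Finset.mem_insert.1 (hV hu)).resolve_left huv
    have hcount := encard_longEdges_of_forall_adj_lt q hv
    set B := {u | G.Adj u v ∧ (q : ℤ) ≤ v - u}
    by_cases hB : ((d + 1 : ℕ) : ℕ∞) ≤ B.encard
    · refine (ih hV' ?_).succ_of_deleteIncidenceSet
      have hchoose : (d + 1 + 1).choose 2 = (d + 1).choose 2 + (d + 1) := by
        rw [Nat.choose_succ_succ' (d + 1), Nat.choose_one_right, add_comm]
      rw [← ENat.add_lt_add_iff_right (ENat.natCast_ne_top (d + 1)), ← Nat.cast_add,
        ← hchoose]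
      calc ((G.deleteIncidenceSet v).longEdges q).encard + (d + 1 : ℕ)
          _ ≤ ((G.deleteIncidenceSet v).longEdges q).encard + B.encard := by gcongr
          _ = (G.longEdges q).encard := hcount.symm
          _ < _ := h
    · rw [not_le] at hB
      refine (ih hV' ?_).of_deleteIncidenceSet_of_encard_neighborSet_lt ?_
      · exact (hcount ▸ le_self_add).trans_lt h
      · calc (G.neighborSet v).encard ≤ B.encard + (q - 1 : ℕ) :=
              encard_neighborSet_le_of_forall_adj_lt q hv
          _ < (d + 1 : ℕ) + (q - 1 : ℕ) := by
            rwa [ENat.add_lt_add_iff_right (ENat.natCast_ne_top _)]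
          _ = (q - 1 + (d + 1) : ℕ) := by push_cast; ring

end Integers

end SimpleGraph

/-- If `k > q ≥ 1` and `G` is a finite graph on a subset of `ℤ` with chromatic
number at least `k`, then `G` contains at least `binom (k-q+1) 2` edges of
length at least `q`. -/
theorem stmt5 (k q : ℕ) (hq : 1 ≤ q) (hkq : q < k)
    (G : SimpleGraph ℤ) (hfin : G.edgeSet.Finite)
    (hchi : (k : ℕ∞) ≤ G.chromaticNumber) :
    ∃ S : Finset (ℤ × ℤ), (k - q + 1).choose 2 ≤ S.card ∧
      ∀ e ∈ S, e.1 < e.2 ∧ G.Adj e.1 e.2 ∧ (q : ℤ) ≤ e.2 - e.1 := by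
  have hlong : ((k - q + 1).choose 2 : ℕ∞) ≤ (G.longEdges q).encard := by
    by_contra! hlt
    have hsupp := SimpleGraph.support_finite_of_edgeSet_finite hfin
    have hcol := SimpleGraph.colorable_of_encard_longEdges_lt q hsupp.toFinset (by simp) hlt
    have : (k : ℕ∞) ≤ (q - 1 + (k - q) : ℕ) := hchi.trans hcol.chromaticNumber_le
    norm_cast at this
    omega
  obtain ⟨S, hS, hScard⟩ := Set.exists_subset_encard_eq hlong
  have hSfin : S.Finite := Set.finite_of_encard_eq_coe hScard
  refine ⟨hSfin.toFinset, ?_, fun e he => hS (hSfin.mem_toFinset.1 he)⟩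
  rw [← Set.ncard_eq_toFinset_card S hSfin, Set.ncard_def, hScard, ENat.toNat_natCast]
end

section
/- Let p ≤ 0, let G be an ordered graph, and say two edges (u1,v1), (u2,v2) are conflicting if u1 - v2 ≥ p or u2 - v1 ≥ p. A set F of edges of G is pairwise non-conflicting if and only if either (a) there exists a closed interval [X, Y] of length at least |p| + 1 contained in the span of every edge of F, or (b) there exists an edge e = (x,y) in F of length at most |p| and a closed interval [X, Y] with X ≤ y + p - 1 and Y ≥ x - p + 1 contained in the span of every edge of F \ {e}. -/
/-- For `p ≤ 0`, a set `F` of edges of an ordered graph is pairwise non-conflicting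
(w.r.t. conflicts `u1 - v2 ≥ p ∨ u2 - v1 ≥ p`) if and only if either (a) there is
a closed interval `[X, Y]` of length at least `|p|+1` contained in the span of every
edge of `F`, or (b) there is an edge `e = (x,y)` in `F` of length at most `|p|` and a
closed interval `[X, Y]` with `X ≤ y + p - 1` and `Y ≥ x - p + 1` contained in the
span of every edge of `F \ {e}`. -/
theorem stmt10 (p : ℤ) (hp : p ≤ 0) (G : SimpleGraph ℤ)
    (F : Set (ℤ × ℤ)) (hF : ∀ e ∈ F, e.1 < e.2 ∧ G.Adj e.1 e.2) (hfin : F.Finite) :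
    (∀ e1 ∈ F, ∀ e2 ∈ F, e1 ≠ e2 →
        ¬(p ≤ e1.1 - e2.2 ∨ p ≤ e2.1 - e1.2)) ↔
    ((∃ X Y : ℤ, -p + 1 ≤ Y - X ∧ ∀ e ∈ F, e.1 ≤ X ∧ Y ≤ e.2) ∨
     (∃ e ∈ F, e.2 - e.1 ≤ -p ∧
        ∃ X Y : ℤ, X ≤ e.2 + p - 1 ∧ e.1 - p + 1 ≤ Y ∧
          ∀ e' ∈ F, e' ≠ e → e'.1 ≤ X ∧ Y ≤ e'.2)) := by
  constructor
  · intro h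
    rcases Set.eq_empty_or_nonempty F with hF0 | hF0
    · left
      exact ⟨0, -p + 1, by omega, by simp [hF0]⟩
    · have hSne : hfin.toFinset.Nonempty := by
        simpa [Set.Finite.toFinset_nonempty] using hF0
      obtain ⟨a, haS, ha⟩ := hfin.toFinset.exists_max_image Prod.fst hSne
      obtain ⟨b, hbS, hb⟩ := hfin.toFinset.exists_min_image Prod.snd hSne
      rw [Set.Finite.mem_toFinset] at haS hbS
      have ha' : ∀ e ∈ F, e.1 ≤ a.1 := fun e he => ha e (hfin.mem_toFinset.2 he)
      have hb' : ∀ e ∈ F, b.2 ≤ e.2 := fun e he => hb e (hfin.mem_toFinset.2 he)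
      by_cases hab : a = b
      · subst hab
        by_cases hlen : -p + 1 ≤ a.2 - a.1
        · left
          exact ⟨a.1, a.2, hlen, fun e he => ⟨ha' e he, hb' e he⟩⟩
        · right
          refine ⟨a, haS, by omega, a.2 + p - 1, a.1 - p + 1, le_refl _, le_refl _,
            fun e' he' hne => ?_⟩
          have := h e' he' a haS hne
          push_neg at this
          omega
      · left
        have := h a haS b hbS hab
        push_neg at this
        exact ⟨a.1, b.2, by omega, fun e he => ⟨ha' e he, hb' e he⟩⟩
  · rintro (⟨X, Y, hXY, hall⟩ | ⟨e, heF, hlen, X, Y, hX, hY, hall⟩)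
    · intro e1 he1 e2 he2 hne
      have h1 := hall e1 he1
      have h2 := hall e2 he2
      omega
    · intro e1 he1 e2 he2 hne
      by_cases h1 : e1 = e
      · subst h1
        have h2 := hall e2 he2 (by rintro rfl; exact hne rfl)
        omega
      · by_cases h2 : e2 = e
        · subst h2
          have h1' := hall e1 he1 h1
          omega
        · have h1' := hall e1 he1 h1
          have h2' := hall e2 he2 h2
          omega
end

section
/- Let p ≥ 1 and let G be an ordered graph with chromatic number at least k ≥ 2, where edges (u1,v1), (u2,v2) are conflicting if |u1 - u2| ≥ p (left endpoints differ by at least p). Then G contains a set of ⌈(k-1)/p⌉ pairwise conflicting edges, i.e., ⌈(k-1)/p⌉ edges whose left endpoints are pairwise at distance at least p. -/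
/-!
Pick an edge with the smallest left endpoint `u` and recurse on the edges whose left
endpoint is at least `u + p`. This greedy choice gives `p`-separated edges `e₁, …, e_t`
whose windows `[eᵢ.1, eᵢ.1 + p)` contain every left endpoint. The union of the windows
has at most `t p` vertices and meets every edge, so colouring it injectively and
everything else with one extra colour gives `χ ≤ t p + 1`. Hence `t ≥ ⌈(k - 1) / p⌉`.
-/

open Finset

theorem SimpleGraph.colorable_card_add_one_of_forall_adj {V : Type*} {G : SimpleGraph V}
    (W : Finset V) (hW : ∀ a b, G.Adj a b → a ∈ W ∨ b ∈ W) :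
    G.Colorable (#W + 1) := by
  classical
  let C : G.Coloring (Option W) :=
    Coloring.mk (fun v => if hv : v ∈ W then some ⟨v, hv⟩ else none) fun {a b} hab => by
      have hne := hab.ne
      rcases hW a b hab with ha | hb <;> split_ifs <;> simp_all
  simpa using C.colorable

theorem SimpleGraph.colorable_of_forall_adj_mem_Ico {ι : Type*} {G : SimpleGraph ℤ} {p : ℕ}
    (S : Finset ι) (f : ι → ℤ)
    (hS : ∀ a b, a < b → G.Adj a b → ∃ s ∈ S, f s ≤ a ∧ a < f s + p) :
    G.Colorable (#S * p + 1) := by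
  classical
  set W := S.biUnion fun s => Ico (f s) (f s + p)
  have hcard : #W ≤ #S * p := card_biUnion_le_card_mul _ _ _ fun s _ => by simp
  have hcover : ∀ a b, G.Adj a b → a ∈ W ∨ b ∈ W := by
    have hleft : ∀ a b, a < b → G.Adj a b → a ∈ W := fun a b hab hadj => by
      obtain ⟨s, hs, hsa, has⟩ := hS a b hab hadj
      exact mem_biUnion.2 ⟨s, hs, mem_Ico.2 ⟨hsa, has⟩⟩
    intro a b hadj
    rcases lt_or_gt_of_ne hadj.ne with hab | hba
    · exact .inl (hleft a b hab hadj)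
    · exact .inr (hleft b a hba hadj.symm)
  exact (colorable_card_add_one_of_forall_adj W hcover).mono (by omega)

theorem Finset.exists_separated_subset_forall_mem_Ico {ι : Type*} [DecidableEq ι]
    (f : ι → ℤ) {p : ℕ} (hp : 0 < p) (E : Finset ι) :
    ∃ S ⊆ E, (∀ a ∈ S, ∀ b ∈ S, a ≠ b → (p : ℤ) ≤ |f a - f b|) ∧
      ∀ e ∈ E, ∃ s ∈ S, f s ≤ f e ∧ f e < f s + p := by
  induction E using Finset.strongInduction with
  | H E ih =>
    rcases E.eq_empty_or_nonempty with rfl | hE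
    · exact ⟨∅, by simp⟩
    obtain ⟨x, hxE, hxmin⟩ := E.exists_min_image f hE
    set E' := E.filter fun e => f x + p ≤ f e
    have hE' : E' ⊂ E := filter_ssubset.2 ⟨x, hxE, by omega⟩
    obtain ⟨S', hS'E', hsep', hcover'⟩ := ih E' hE'
    have hfar : ∀ s ∈ S', f x + p ≤ f s := fun s hs => (mem_filter.1 (hS'E' hs)).2
    refine ⟨insert x S', insert_subset hxE (hS'E'.trans (filter_subset _ _)), ?_, ?_⟩
    · intro a ha b hb hab
      rcases mem_insert.1 ha with rfl | ha' <;> rcases mem_insert.1 hb with rfl | hb'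
      · exact absurd rfl hab
      · have := hfar b hb'
        rw [abs_sub_comm, abs_of_nonneg (by omega)]
        omega
      · have := hfar a ha'
        rw [abs_of_nonneg (by omega)]
        omega
      · exact hsep' a ha' b hb' hab
    · intro e he
      by_cases hfe : f x + p ≤ f e
      · obtain ⟨s, hs, hse⟩ := hcover' e (mem_filter.2 ⟨he, hfe⟩)
        exact ⟨s, mem_insert_of_mem hs, hse⟩
      · exact ⟨x, mem_insert_self _ _, hxmin e he, by omega⟩

theorem SimpleGraph.finite_setOf_lt_adj {G : SimpleGraph ℤ} (hfin : G.edgeSet.Finite) :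
    {e : ℤ × ℤ | e.1 < e.2 ∧ G.Adj e.1 e.2}.Finite := by
  refine Set.Finite.of_finite_image (f := fun e => s(e.1, e.2)) (hfin.subset ?_) ?_
  · rintro _ ⟨e, he, rfl⟩
    exact he.2
  · rintro ⟨a, b⟩ ⟨hab, -⟩ ⟨c, d⟩ ⟨hcd, -⟩ h
    rcases Sym2.eq_iff.1 h with ⟨rfl, rfl⟩ | ⟨rfl, rfl⟩
    · rfl
    · exact absurd (hab.trans hcd) (lt_irrefl _)

theorem stmt12_general (p k : ℕ) (hp : 1 ≤ p)
    (G : SimpleGraph ℤ) (hfin : G.edgeSet.Finite)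
    (hchi : (k : ℕ∞) ≤ G.chromaticNumber) :
    ∃ S : Finset (ℤ × ℤ), S.card = (k + p - 2) / p ∧
      (∀ e ∈ S, e.1 < e.2 ∧ G.Adj e.1 e.2) ∧
      ∀ e1 ∈ S, ∀ e2 ∈ S, e1 ≠ e2 → (p : ℤ) ≤ |e1.1 - e2.1| := by
  classical
  obtain ⟨S, hSE, hsep, hcover⟩ :=
    exists_separated_subset_forall_mem_Ico Prod.fst hp
      (SimpleGraph.finite_setOf_lt_adj hfin).toFinset
  have hcol : G.Colorable (#S * p + 1) :=
    G.colorable_of_forall_adj_mem_Ico S Prod.fst fun a b hab hadj =>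
      hcover (a, b) (by simpa using And.intro hab hadj)
  have hk_le : k ≤ #S * p + 1 := by exact_mod_cast hchi.trans hcol.chromaticNumber_le
  have hcard : (k + p - 2) / p ≤ #S := by
    rw [← Nat.lt_succ_iff, Nat.div_lt_iff_lt_mul hp, Nat.succ_mul]
    omega
  obtain ⟨T, hTS, hT⟩ := exists_subset_card_eq hcard
  exact ⟨T, hT, fun e he => by simpa using hSE (hTS he),
    fun e1 h1 e2 h2 => hsep e1 (hTS h1) e2 (hTS h2)⟩

/-- For `p ≥ 1` and `k ≥ 2`, any finite ordered graph with chromatic number at least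
`k` contains `⌈(k-1)/p⌉` edges whose left endpoints are pairwise at distance at
least `p`. -/
theorem stmt12 (p k : ℕ) (hp : 1 ≤ p) (hk : 2 ≤ k)
    (G : SimpleGraph ℤ) (hfin : G.edgeSet.Finite)
    (hchi : (k : ℕ∞) ≤ G.chromaticNumber) :
    ∃ S : Finset (ℤ × ℤ), S.card = (k + p - 2) / p ∧
      (∀ e ∈ S, e.1 < e.2 ∧ G.Adj e.1 e.2) ∧
      ∀ e1 ∈ S, ∀ e2 ∈ S, e1 ≠ e2 → (p : ℤ) ≤ |e1.1 - e2.1| :=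
  stmt12_general p k hp G hfin hchi
end

section
/- Let p ≥ 1 and let G be an ordered graph with chromatic number at least k ≥ 2. Consider the conflict relation where edges (u1,v1), (u2,v2) are conflicting if |(u1+v1) - (u2+v2)| ≥ p (their midpoints are at distance at least p/2). Then G contains ⌈(2k-3)/p⌉ pairwise conflicting edges. Moreover, for the complete graph on vertex set {1,...,k} the maximum number of pairwise conflicting edges is exactly ⌈(2k-3)/p⌉. -/
/-!
A graph with chromatic number at least `k` contains a nonempty vertex set `B` in which every
vertex has at least `k - 1` neighbours: repeatedly delete a vertex of smaller degree, which
keeps the graph non-`(k - 1)`-colourable. With `v = min B` and `w = max B`, the edges from `v`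
to its neighbours `x` in `B` and the edges from `w` to its neighbours `y` in `B` have sums
`v + x ≤ v + w ≤ y + w`, so together they realise at least `2k - 3` distinct sums. Greedily
keeping the smallest sum and discarding the next `p - 1` integers leaves `⌈(2k - 3)/p⌉` sums
that are pairwise at distance at least `p`.

Conversely, the edge sums of the complete graph on `{1, …, k}` lie in `[3, 2k - 1]`, and
`x ↦ ⌊(x - 3)/p⌋` is injective on any subset whose elements are pairwise at distance `≥ p`.
-/

open Finset

theorem exists_pairwise_le_abs_sub_subset {p : ℕ} (hp : 0 < p) (T : Finset ℤ) :
    ∃ U ⊆ T, (#T + p - 1) / p ≤ #U ∧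
      (U : Set ℤ).Pairwise fun x y => (p : ℤ) ≤ |x - y| := by
  induction T using Finset.strongInduction with
  | H T ih =>
  obtain rfl | hT := T.eq_empty_or_nonempty
  · exact ⟨∅, empty_subset _, by simp [Nat.div_eq_of_lt (Nat.sub_one_lt_of_lt hp)], by simp⟩
  set m := T.min' hT
  set T' := {x ∈ T | m + p ≤ x}
  have hT' : T' ⊂ T := filter_ssubset.2 ⟨m, T.min'_mem hT, by simpa using hp.ne'⟩
  obtain ⟨U, hUT', hU, hUsep⟩ := ih T' hT'
  have hUT : ∀ x ∈ U, x ∈ T ∧ m + p ≤ x := fun x hx => mem_filter.1 (hUT' hx)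
  have hcard : #T ≤ #T' + p :=
    calc #T ≤ #(T' ∪ Ico m (m + p)) := card_le_card fun x hx => by
            rcases le_or_gt (m + p) x with h | h
            exacts [mem_union_left _ (mem_filter.2 ⟨hx, h⟩),
              mem_union_right _ (mem_Ico.2 ⟨T.min'_le x hx, h⟩)]
      _ ≤ #T' + #(Ico m (m + p)) := card_union_le _ _
      _ = #T' + p := by simp
  refine ⟨insert m U, insert_subset (T.min'_mem hT) fun x hx => (hUT x hx).1, ?_, ?_⟩
  · rw [card_insert_of_notMem fun hm => by have := (hUT m hm).2; omega]
    calc (#T + p - 1) / p ≤ (#T' + p - 1 + p) / p := Nat.div_le_div_right (by omega)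
      _ = (#T' + p - 1) / p + 1 := Nat.add_div_right _ hp
      _ ≤ #U + 1 := by omega
  · rw [coe_insert, Set.pairwise_insert]
    refine ⟨hUsep, fun x hx _ => ?_⟩
    have := (hUT x hx).2
    constructor <;> [rw [abs_sub_comm, abs_of_nonneg]; rw [abs_of_nonneg]] <;> omega

theorem card_le_of_pairwise_le_abs_sub {p n : ℕ} (hp : 0 < p) {a : ℤ} {U : Finset ℤ}
    (hU : U ⊆ Icc a (a + n)) (hsep : (U : Set ℤ).Pairwise fun x y => (p : ℤ) ≤ |x - y|) :
    #U ≤ n / p + 1 := by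
  have hp' : (0 : ℤ) < p := by exact_mod_cast hp
  have hbound : ∀ x ∈ U, 0 ≤ (x - a) / p ∧ (x - a) / p ≤ (n / p : ℕ) := fun x hx => by
    obtain ⟨hax, hxn⟩ := mem_Icc.1 (hU hx)
    refine ⟨Int.ediv_nonneg (by omega) hp'.le, ?_⟩
    push_cast
    exact Int.ediv_le_ediv hp' (by omega)
  calc #U ≤ #(range (n / p + 1)) := by
        refine card_le_card_of_injOn (fun x => ((x - a) / p).toNat) (fun x hx => ?_) ?_
        · have := hbound x hx
          rw [coe_range, Set.mem_Iio]
          change ((x - a) / p).toNat < n / p + 1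
          omega
        · intro x hx y hy hxy
          by_contra hne
          have hq : (x - a) / p = (y - a) / p := by
            have := hbound x hx; have := hbound y hy
            simp only at hxy
            omega
          have := hsep hx hy hne
          have := Int.mul_ediv_self_le (x := x - a) hp'.ne'
          have := Int.lt_mul_ediv_self_add (x := x - a) hp'
          have := Int.mul_ediv_self_le (x := y - a) hp'.ne'
          have := Int.lt_mul_ediv_self_add (x := y - a) hp'
          rw [hq] at *
          rcases abs_cases (x - y) with ⟨h, _⟩ | ⟨h, _⟩ <;> linarith
    _ = n / p + 1 := card_range _

namespace SimpleGraph

section Degeneracy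

variable {V : Type*} {G : SimpleGraph V} {k : ℕ}

theorem Colorable.of_deleteIncidenceSet [DecidableEq V] {a : V} (N : Finset V)
    (hN : G.neighborSet a ⊆ N) (hNk : #N < k) (h : (G.deleteIncidenceSet a).Colorable k) :
    G.Colorable k := by
  obtain ⟨C⟩ := h
  obtain ⟨c, hc⟩ : ∃ c : Fin k, c ∉ N.image C := by
    by_contra! hall
    have := card_le_card fun c (_ : c ∈ univ) => hall c
    simp only [card_univ, Fintype.card_fin] at this
    exact absurd (this.trans card_image_le) hNk.not_ge
  refine ⟨Coloring.mk (fun x => if x = a then c else C x) fun {v w} hvw => ?_⟩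
  by_cases hv : v = a <;> by_cases hw : w = a
  · exact absurd (hv.trans hw.symm) hvw.ne
  · subst hv
    simp only [↓reduceIte, hw]
    exact fun h => hc (h ▸ mem_image_of_mem C (hN hvw))
  · subst hw
    simp only [↓reduceIte, hv]
    exact fun h => hc (h ▸ mem_image_of_mem C (hN hvw.symm))
  · simpa [hv, hw] using C.valid (deleteIncidenceSet_adj.mpr ⟨hvw, hv, hw⟩)

theorem exists_forall_adj_mem_of_edgeSet_finite (hG : G.edgeSet.Finite) :
    ∃ A : Finset V, ∀ x y, G.Adj x y → x ∈ A := by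
  classical
  exact ⟨hG.toFinset.biUnion Sym2.toFinset, fun x y hxy =>
    mem_biUnion.2 ⟨s(x, y), hG.mem_toFinset.2 hxy,
      Sym2.mem_toFinset.2 (Sym2.mem_mk_left x y)⟩⟩

theorem exists_forall_le_card_adj_of_not_colorable [DecidableEq V] [DecidableRel G.Adj]
    (hk : 0 < k) (A : Finset V) (hA : ∀ x y, G.Adj x y → x ∈ A) (h : ¬ G.Colorable k) :
    ∃ B : Finset V, B.Nonempty ∧ ∀ a ∈ B, k ≤ #{x ∈ B | G.Adj a x} := by
  induction A using Finset.strongInduction generalizing G with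
  | H A ih =>
  by_cases hdeg : ∀ a ∈ A, k ≤ #{x ∈ A | G.Adj a x}
  · refine ⟨A, nonempty_iff_ne_empty.2 fun hA0 => h ⟨Coloring.mk (fun _ => ⟨0, hk⟩) ?_⟩,
      hdeg⟩
    exact fun hvw => by simpa [hA0] using hA _ _ hvw
  push Not at hdeg
  obtain ⟨a, ha, hlt⟩ := hdeg
  have hA' : ∀ x y, (G.deleteIncidenceSet a).Adj x y → x ∈ A.erase a := fun x y hxy =>
    mem_erase.2 ⟨(deleteIncidenceSet_adj.1 hxy).2.1, hA x y (deleteIncidenceSet_adj.1 hxy).1⟩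
  have h' : ¬ (G.deleteIncidenceSet a).Colorable k := fun hc =>
    h (hc.of_deleteIncidenceSet _ (fun x hx => mem_filter.2 ⟨hA x a hx.symm, hx⟩) hlt)
  obtain ⟨B, hB, hBdeg⟩ := ih _ (erase_ssubset ha) hA' h'
  refine ⟨B, hB, fun b hb => (hBdeg b hb).trans (card_le_card fun x hx => ?_)⟩
  simp only [mem_filter, deleteIncidenceSet_adj] at hx ⊢
  exact ⟨hx.1, hx.2.1⟩

end Degeneracy

def orderedEdgeSet {V : Type*} [LinearOrder V] (G : SimpleGraph V) : Set (V × V) :=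
  {e | e.1 < e.2 ∧ G.Adj e.1 e.2}

theorem exists_surjOn_sum_orderedEdgeSet {G : SimpleGraph ℤ} [DecidableRel G.Adj] {d : ℕ}
    (B : Finset ℤ) (hB : B.Nonempty) (hdeg : ∀ a ∈ B, d ≤ #{x ∈ B | G.Adj a x}) :
    ∃ T : Finset ℤ, 2 * d - 1 ≤ #T ∧
      Set.SurjOn (fun e : ℤ × ℤ => e.1 + e.2) G.orderedEdgeSet T := by
  set v := B.min' hB
  set w := B.max' hB
  set X := {x ∈ B | G.Adj v x}.image (v + ·)
  set Y := {y ∈ B | G.Adj w y}.image (· + w)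
  have hX : d ≤ #X := by
    rw [card_image_of_injective _ (add_right_injective v)]; exact hdeg v (B.min'_mem hB)
  have hY : d ≤ #Y := by
    rw [card_image_of_injective _ (add_left_injective w)]; exact hdeg w (B.max'_mem hB)
  have hXY : #(X ∩ Y) ≤ 1 := by
    refine card_le_one.2 fun s hs t ht => ?_
    simp only [X, Y, mem_inter, mem_image, mem_filter] at hs ht
    obtain ⟨⟨x, ⟨hx, -⟩, rfl⟩, ⟨y, ⟨hy, -⟩, hy'⟩⟩ := hs
    obtain ⟨⟨x', ⟨hx', -⟩, rfl⟩, ⟨y', ⟨hy', -⟩, hy''⟩⟩ := ht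
    have := B.le_max' x hx; have := B.min'_le y hy
    have := B.le_max' x' hx'; have := B.min'_le y' hy'
    omega
  refine ⟨X ∪ Y, by have := card_union_add_card_inter X Y; omega, fun s hs => ?_⟩
  simp only [X, Y, coe_union, coe_image, Set.mem_union, Set.mem_image, mem_coe, mem_filter] at hs
  rcases hs with ⟨x, ⟨hx, hvx⟩, rfl⟩ | ⟨y, ⟨hy, hwy⟩, rfl⟩
  · exact ⟨(v, x), ⟨(B.min'_le x hx).lt_of_ne hvx.ne, hvx⟩, rfl⟩
  · exact ⟨(y, w), ⟨(B.le_max' y hy).lt_of_ne hwy.ne', hwy.symm⟩, rfl⟩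

theorem exists_pairwise_le_abs_sum_sub_of_le_chromaticNumber {p k : ℕ} (hp : 0 < p)
    (hk : 2 ≤ k) {G : SimpleGraph ℤ} (hG : G.edgeSet.Finite)
    (hχ : (k : ℕ∞) ≤ G.chromaticNumber) :
    ∃ S : Finset (ℤ × ℤ), #S = (2 * k + p - 4) / p ∧ ↑S ⊆ G.orderedEdgeSet ∧
      (S : Set (ℤ × ℤ)).Pairwise fun e₁ e₂ =>
        (p : ℤ) ≤ |(e₁.1 + e₁.2) - (e₂.1 + e₂.2)| := by
  classical
  have hncol : ¬ G.Colorable (k - 1) := fun h => by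
    have := hχ.trans h.chromaticNumber_le
    norm_cast at this
    omega
  obtain ⟨A, hA⟩ := exists_forall_adj_mem_of_edgeSet_finite hG
  obtain ⟨B, hB, hBdeg⟩ := exists_forall_le_card_adj_of_not_colorable (by omega) A hA hncol
  obtain ⟨T, hT, hTsurj⟩ := exists_surjOn_sum_orderedEdgeSet B hB hBdeg
  obtain ⟨U, hUT, hU, hUsep⟩ := exists_pairwise_le_abs_sub_subset hp T
  obtain ⟨U', hU'U, hU'⟩ := exists_subset_card_eq
    ((Nat.div_le_div_right (by omega) : (2 * k + p - 4) / p ≤ (#T + p - 1) / p).trans hU)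
  obtain ⟨S, hSE, hSinj, hSU'⟩ := exists_subset_injOn_image_eq_of_surjOn _ U'
    (hTsurj.mono subset_rfl (by simpa using hU'U.trans hUT))
  refine ⟨S, by rw [← hU', ← hSU', card_image_of_injOn hSinj], hSE,
    fun e₁ h₁ e₂ h₂ hne => ?_⟩
  have hmem : ∀ e ∈ S, e.1 + e.2 ∈ U := fun e he => hU'U (hSU' ▸ mem_image_of_mem _ he)
  exact hUsep (hmem e₁ h₁) (hmem e₂ h₂) (hSinj.ne h₁ h₂ hne)

end SimpleGraph

theorem card_le_of_pairwise_le_abs_sum_sub {p k : ℕ} (hp : 0 < p) (hk : 2 ≤ k)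
    {S : Finset (ℤ × ℤ)} (hS : ∀ e ∈ S, 1 ≤ e.1 ∧ e.1 < e.2 ∧ e.2 ≤ (k : ℤ))
    (hsep : (S : Set (ℤ × ℤ)).Pairwise fun e₁ e₂ =>
      (p : ℤ) ≤ |(e₁.1 + e₁.2) - (e₂.1 + e₂.2)|) :
    #S ≤ (2 * k + p - 4) / p := by
  set f := fun e : ℤ × ℤ => e.1 + e.2
  have hinj : Set.InjOn f S := fun e₁ h₁ e₂ h₂ h => by
    by_contra hne
    have := hsep h₁ h₂ hne
    simp only [f] at h
    simp only [h, sub_self, abs_zero] at this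
    omega
  have hsub : S.image f ⊆ Icc 3 (3 + (2 * k - 4 : ℕ)) := fun s hs => by
    obtain ⟨e, he, rfl⟩ := mem_image.1 hs
    have := hS e he
    rw [mem_Icc, show f e = e.1 + e.2 from rfl]
    omega
  have hsep' : (S.image f : Set ℤ).Pairwise fun x y => (p : ℤ) ≤ |x - y| := by
    rw [coe_image]; exact hinj.pairwise_image.2 hsep
  calc #S = #(S.image f) := (card_image_of_injOn hinj).symm
    _ ≤ (2 * k - 4) / p + 1 := card_le_of_pairwise_le_abs_sub hp hsub hsep'
    _ = (2 * k + p - 4) / p := by rw [← Nat.add_div_right _ hp]; congr 1; omega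

/-- For `p ≥ 1`, `k ≥ 2`: any finite ordered graph with chromatic number at least `k`
contains `⌈(2k-3)/p⌉` edges with `|(u1+v1) - (u2+v2)| ≥ p` pairwise (midpoints at
distance at least `p/2`); and for the complete graph on `{1,…,k}` this is the maximum
size of such a set. -/
theorem stmt15 (p k : ℕ) (hp : 1 ≤ p) (hk : 2 ≤ k) :
    (∀ G : SimpleGraph ℤ, G.edgeSet.Finite → (k : ℕ∞) ≤ G.chromaticNumber →
      ∃ S : Finset (ℤ × ℤ), S.card = (2 * k + p - 4) / p ∧
        (∀ e ∈ S, e.1 < e.2 ∧ G.Adj e.1 e.2) ∧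
        ∀ e1 ∈ S, ∀ e2 ∈ S, e1 ≠ e2 →
          (p : ℤ) ≤ |(e1.1 + e1.2) - (e2.1 + e2.2)|) ∧
    (∀ S : Finset (ℤ × ℤ),
      (∀ e ∈ S, 1 ≤ e.1 ∧ e.1 < e.2 ∧ e.2 ≤ (k : ℤ)) →
      (∀ e1 ∈ S, ∀ e2 ∈ S, e1 ≠ e2 →
        (p : ℤ) ≤ |(e1.1 + e1.2) - (e2.1 + e2.2)|) →
      S.card ≤ (2 * k + p - 4) / p) :=
  ⟨fun _ hG hχ =>
      (SimpleGraph.exists_pairwise_le_abs_sum_sub_of_le_chromaticNumber hp hk hG hχ).imp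
        fun _ ⟨hcard, hedges, hsep⟩ => ⟨hcard, fun _ he => hedges he, hsep⟩,
    fun _ hS hsep => card_le_of_pairwise_le_abs_sum_sub hp hk hS hsep⟩
end

section
/- Let p ≥ 2 and k ≥ p + 1, and consider the complete graph K_k on vertex set {1,...,k} with the conflict relation in which edges (u1,v1), (u2,v2) are conflicting if v2 - u1 ≥ p or v1 - u2 ≥ p. Then the maximum size of a set of pairwise conflicting edges in K_k equals binom(k - p + 2, 2), attained by the set of all edges of length at least p - 1. -/
/-!
Every edge shorter than `p - 1` can be stretched to an edge of length exactly `p - 1` sharing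
its left endpoint (or, if that leaves `{1, …, k}`, its right endpoint); in a conflicting family
this stretching is injective, since two edges with a common endpoint, at least one of them of
length less than `p - 1`, never conflict. So a conflicting family is no larger than the set of
edges of length at least `p - 1`, and that set is itself conflicting: two such edges that do not
conflict both have length `p - 1` and coincide. Shifting right endpoints by `p - 2` identifies it
with the set of all edges on `{1, …, k - p + 2}`.
-/

open Finset

noncomputable def longEdges (k ℓ : ℤ) : Finset (ℤ × ℤ) :=
  {e ∈ Icc 1 k ×ˢ Icc 1 k | e.1 < e.2 ∧ ℓ ≤ e.2 - e.1}

def Conflict (p : ℤ) (e₁ e₂ : ℤ × ℤ) : Prop :=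
  p ≤ e₂.2 - e₁.1 ∨ p ≤ e₁.2 - e₂.1

lemma mem_longEdges {k ℓ : ℤ} {e : ℤ × ℤ} :
    e ∈ longEdges k ℓ ↔ 1 ≤ e.1 ∧ e.1 < e.2 ∧ e.2 ≤ k ∧ ℓ ≤ e.2 - e.1 := by
  simp only [longEdges, mem_filter, mem_product, mem_Icc]
  omega

lemma card_longEdges (k : ℤ) {ℓ : ℤ} (hℓ : 1 ≤ ℓ) :
    #(longEdges k ℓ) = (k - ℓ + 1).toNat.choose 2 := by
  have hIcc : #(Icc 1 (k - ℓ + 1)) = (k - ℓ + 1).toNat := by simp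
  rw [← hIcc, ← card_product_filter_lt]
  apply card_nbij' (fun e => (e.1, e.2 - ℓ + 1)) (fun e => (e.1, e.2 + ℓ - 1))
  · intro e he
    simp only [mem_coe, mem_longEdges, coe_filter, mem_product, mem_Icc,
      Set.mem_ofPred_eq] at he ⊢
    omega
  · intro e he
    simp only [mem_coe, mem_longEdges, coe_filter, mem_product, mem_Icc,
      Set.mem_ofPred_eq] at he ⊢
    omega
  · intro e _
    ext
    · rfl
    · dsimp only; ring
  · intro e _
    ext
    · rfl
    · dsimp only; ring

lemma pairwise_conflict_longEdges (p k : ℤ) :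
    (longEdges k (p - 1) : Set (ℤ × ℤ)).Pairwise (Conflict p) := by
  intro e₁ he₁ e₂ he₂ hne
  rw [mem_coe, mem_longEdges] at he₁ he₂
  by_contra h
  unfold Conflict at h
  exact hne (Prod.ext (by omega) (by omega))

def stretch (p k : ℤ) (e : ℤ × ℤ) : ℤ × ℤ :=
  if p - 1 ≤ e.2 - e.1 then e
  else if e.1 + p - 1 ≤ k then (e.1, e.1 + p - 1)
  else (e.2 - p + 1, e.2)

lemma stretch_mem_longEdges {p k : ℤ} {e : ℤ × ℤ}
    (he : 1 ≤ e.1 ∧ e.1 < e.2 ∧ e.2 ≤ k) (hroom : e.1 + p - 1 ≤ k ∨ p ≤ e.2) :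
    stretch p k e ∈ longEdges k (p - 1) := by
  unfold stretch
  split_ifs <;> simp only [mem_longEdges] <;> omega

lemma stretch_ne_of_conflict {p k : ℤ} {e₁ e₂ : ℤ × ℤ} (hne : e₁ ≠ e₂)
    (hc : Conflict p e₁ e₂) : stretch p k e₁ ≠ stretch p k e₂ := by
  obtain ⟨u₁, v₁⟩ := e₁
  obtain ⟨u₂, v₂⟩ := e₂
  simp only [ne_eq, Prod.mk.injEq, not_and] at hne
  unfold Conflict at hc
  unfold stretch
  dsimp only at hc ⊢
  split_ifs <;> simp only [ne_eq, Prod.mk.injEq] <;> omega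

lemma room_of_conflict {p k : ℤ} {e e' : ℤ × ℤ}
    (he' : 1 ≤ e'.1 ∧ e'.1 < e'.2 ∧ e'.2 ≤ k)
    (hc : Conflict p e e') : e.1 + p - 1 ≤ k ∨ p ≤ e.2 := by
  unfold Conflict at hc
  omega

theorem card_le_card_longEdges_of_pairwise_conflict {p k : ℤ} (hpk : p ≤ k)
    {S : Finset (ℤ × ℤ)} (hS : ∀ e ∈ S, 1 ≤ e.1 ∧ e.1 < e.2 ∧ e.2 ≤ k)
    (hc : (S : Set (ℤ × ℤ)).Pairwise (Conflict p)) :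
    #S ≤ #(longEdges k (p - 1)) := by
  obtain hS₁ | hS₁ := le_or_gt #S 1
  · obtain rfl | ⟨e, he⟩ := S.eq_empty_or_nonempty
    · simp
    have : (1, k) ∈ longEdges k (p - 1) := mem_longEdges.2 (by have := hS e he; dsimp only; omega)
    exact hS₁.trans (one_le_card.2 ⟨_, this⟩)
  refine card_le_card_of_injOn (stretch p k) (fun e he => ?_) ?_
  · obtain ⟨e', he', hne⟩ := exists_mem_ne hS₁ e
    exact stretch_mem_longEdges (hS e he) (room_of_conflict (hS e' he') (hc he he' hne.symm))
  · intro e₁ he₁ e₂ he₂ heq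
    by_contra hne
    exact stretch_ne_of_conflict hne (hc he₁ he₂ hne) heq

/-- For `p ≥ 2` and `k ≥ p + 1`, in the complete graph on `{1,…,k}` with conflicts
`v2 - u1 ≥ p ∨ v1 - u2 ≥ p`, the maximum size of a set of pairwise conflicting edges
is `binom (k-p+2) 2`, attained by the set of all edges of length at least `p - 1`. -/
theorem stmt16 (p k : ℕ) (hp : 2 ≤ p) (hk : p + 1 ≤ k) :
    (∀ S : Finset (ℤ × ℤ),
      (∀ e ∈ S, 1 ≤ e.1 ∧ e.1 < e.2 ∧ e.2 ≤ (k : ℤ)) →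
      (∀ e1 ∈ S, ∀ e2 ∈ S, e1 ≠ e2 →
        ((p : ℤ) ≤ e2.2 - e1.1 ∨ (p : ℤ) ≤ e1.2 - e2.1)) →
      S.card ≤ (k - p + 2).choose 2) ∧
    (∃ S : Finset (ℤ × ℤ), S.card = (k - p + 2).choose 2 ∧
      (∀ e : ℤ × ℤ, e ∈ S ↔
        (1 ≤ e.1 ∧ e.1 < e.2 ∧ e.2 ≤ (k : ℤ) ∧ (p : ℤ) - 1 ≤ e.2 - e.1)) ∧
      (∀ e1 ∈ S, ∀ e2 ∈ S, e1 ≠ e2 →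
        ((p : ℤ) ≤ e2.2 - e1.1 ∨ (p : ℤ) ≤ e1.2 - e2.1))) := by
  have hcard : #(longEdges k (p - 1)) = (k - p + 2).choose 2 := by
    rw [card_longEdges k (by omega)]
    congr 1
    omega
  refine ⟨fun S hS hc => ?_, longEdges k (p - 1), hcard, fun e => mem_longEdges,
    fun e₁ he₁ e₂ he₂ hne => pairwise_conflict_longEdges p k he₁ he₂ hne⟩
  rw [← hcard]
  exact card_le_card_longEdges_of_pairwise_conflict (by omega) hS
    fun e₁ he₁ e₂ he₂ hne => hc e₁ he₁ e₂ he₂ hne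
end

section
/- Let q ≥ 0 and a ≥ 1 be integers and let G be an ordered graph on vertex set {1,...,n} such that every set of pairwise 'deeply nested' edges has size at most a, where edges (u1,v1), (u2,v2) are deeply nested if u2 - u1 ≥ q+1 and v1 - v2 ≥ q+1, or u1 - u2 ≥ q+1 and v2 - v1 ≥ q+1. Then G has at most (2n-3)·a·(q+1) edges. (Proof idea: edges with equal midpoint sum u+v that are pairwise deeply nested form chains; each midpoint class has at most a(q+1) edges and there are at most 2n-3 midpoint classes.) -/
/-- If every set of pairwise deeply nested edges (nested with both endpoint gaps at
least `q+1`) of an ordered graph on `{1,…,n}` has size at most `a`, then the graph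
has at most `(2n-3)·a·(q+1)` edges. -/
theorem stmt17 (n a q : ℕ) (ha : 1 ≤ a) (E : Finset (ℤ × ℤ))
    (hE : ∀ e ∈ E, 1 ≤ e.1 ∧ e.1 < e.2 ∧ e.2 ≤ (n : ℤ))
    (hind : ∀ S ⊆ E,
      (∀ e1 ∈ S, ∀ e2 ∈ S, e1 ≠ e2 →
        (((q : ℤ) + 1 ≤ e2.1 - e1.1 ∧ (q : ℤ) + 1 ≤ e1.2 - e2.2) ∨
         ((q : ℤ) + 1 ≤ e1.1 - e2.1 ∧ (q : ℤ) + 1 ≤ e2.2 - e1.2))) →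
      S.card ≤ a) :
    E.card ≤ (2 * n - 3) * a * (q + 1) := by
  classical
  by_cases hn : (n : ℤ) ≤ 1
  · have hEe : E = ∅ := by
      ext e
      simp only [Finset.notMem_empty, iff_false]
      intro he
      obtain ⟨h1, h2, h3⟩ := hE e he
      omega
    simp [hEe]
  push_neg at hn
  set f : ℤ × ℤ → ℤ × ℤ := fun e => (e.1 + e.2, e.1 % ((q : ℤ) + 1)) with hf
  -- each fiber has card ≤ a
  have hfib : ∀ b ∈ E.image f, (E.filter (fun x => f x = b)).card ≤ a := by
    rintro ⟨s, r⟩ _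
    apply hind _ (Finset.filter_subset _ _)
    intro e1 he1 e2 he2 hne
    simp only [Finset.mem_filter, hf, Prod.mk.injEq] at he1 he2
    obtain ⟨he1E, hs1, hr1⟩ := he1
    obtain ⟨he2E, hs2, hr2⟩ := he2
    have hsum : e1.1 + e1.2 = e2.1 + e2.2 := by rw [hs1, hs2]
    have hdvd : ((q : ℤ) + 1) ∣ (e1.1 - e2.1) := by
      have h : e1.1 % ((q : ℤ) + 1) = e2.1 % ((q : ℤ) + 1) := by rw [hr1, hr2]
      exact Int.dvd_of_emod_eq_zero (by rw [Int.sub_emod, h, sub_self, Int.zero_emod])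
    have hne1 : e1.1 ≠ e2.1 := by
      intro h
      apply hne
      have : e1.2 = e2.2 := by omega
      exact Prod.ext h this
    have habs : (q : ℤ) + 1 ≤ |e1.1 - e2.1| := by
      apply Int.le_of_dvd
      · rcases lt_or_gt_of_ne (sub_ne_zero_of_ne hne1) with h | h
        · simp [abs_of_neg h]; omega
        · simp [abs_of_pos h]; omega
      · exact (dvd_abs _ _).mpr hdvd
    rcases abs_cases (e1.1 - e2.1) with ⟨habs', _⟩ | ⟨habs', _⟩ <;> omega
  have h1 : E.card ≤ a * (E.image f).card := Finset.card_le_mul_card_image E a hfib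
  -- image card bound
  have h2 : E.image f ⊆ Finset.Icc (3 : ℤ) (2 * n - 1) ×ˢ Finset.Icc (0 : ℤ) q := by
    intro b hb
    simp only [Finset.mem_image] at hb
    obtain ⟨e, he, rfl⟩ := hb
    obtain ⟨h1, h2, h3⟩ := hE e he
    simp only [Finset.mem_product, Finset.mem_Icc, hf]
    have hq : (0 : ℤ) < (q : ℤ) + 1 := by positivity
    refine ⟨⟨by omega, by omega⟩, Int.emod_nonneg _ (by omega), ?_⟩
    have := Int.emod_lt_of_pos e.1 hq
    omega
  have h3 : (E.image f).card ≤ (2 * n - 3) * (q + 1) := by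
    calc (E.image f).card ≤ (Finset.Icc (3 : ℤ) (2 * n - 1) ×ˢ Finset.Icc (0 : ℤ) q).card :=
          Finset.card_le_card h2
      _ = (Finset.Icc (3 : ℤ) (2 * n - 1)).card * (Finset.Icc (0 : ℤ) q).card :=
          Finset.card_product _ _
      _ = (2 * n - 3) * (q + 1) := by
          rw [Int.card_Icc, Int.card_Icc]
          have hn2 : 2 ≤ n := by exact_mod_cast by omega
          have e1 : (2 * (n : ℤ) - 1 + 1 - 3).toNat = 2 * n - 3 := by omega
          have e2 : ((q : ℤ) + 1 - 0).toNat = q + 1 := by omega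
          rw [e1, e2]
  calc E.card ≤ a * (E.image f).card := h1
    _ ≤ a * ((2 * n - 3) * (q + 1)) := Nat.mul_le_mul_left a h3
    _ = (2 * n - 3) * a * (q + 1) := by ring
end

section
/- Let p ≥ 1, k ≥ 2, and let G be an ordered graph with chromatic number at least k, where edges (u1,v1), (u2,v2) are conflicting if u1 - v2 ≥ p or u2 - v1 ≥ p. Then G contains an independent set (in the conflict graph) of size at least ⌊(k+1)²/4⌋ - 1; i.e., there are at least ⌊(k+1)²/4⌋ - 1 edges whose spans all contain a common vertex. -/
open Finset

private lemma stmt18_arith (k : ℕ) (hk : 2 ≤ k) :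
    (k + 1) ^ 2 / 4 - 1 ≤ (k - (k + 2) / 2) + ((k + 2) / 2 - 1) * (k + 1 - (k + 2) / 2) := by
  set s := (k + 2) / 2 with hs
  obtain ⟨m, hm | hm⟩ : ∃ m, k = 2 * m ∨ k = 2 * m + 1 := ⟨k / 2, by omega⟩
  · have e1 : s - 1 = m := by omega
    have e2 : k + 1 - s = m := by omega
    have e3 : (k + 1) ^ 2 = 4 * (m * m) + 4 * m + 1 := by subst hm; ring
    rw [e1, e2, e3]
    generalize m * m = q
    omega
  · have e1 : s - 1 = m := by omega
    have e2 : k + 1 - s = m + 1 := by omega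
    have e3 : (k + 1) ^ 2 = 4 * (m * m) + 8 * m + 4 := by subst hm; ring
    have e4 : m * (m + 1) = m * m + m := by ring
    rw [e1, e2, e3, e4]
    generalize m * m = q
    omega

/-- For `p ≥ 1` and `k ≥ 2`, any finite ordered graph with chromatic number at least
`k` contains at least `⌊(k+1)²/4⌋ - 1` edges whose spans share a common point; in
particular these edges are pairwise non-conflicting w.r.t. `u1 - v2 ≥ p ∨ u2 - v1 ≥ p`. -/
theorem stmt18 (p k : ℕ) (hp : 1 ≤ p) (hk : 2 ≤ k)
    (G : SimpleGraph ℤ) (hfin : G.edgeSet.Finite)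
    (hchi : (k : ℕ∞) ≤ G.chromaticNumber) :
    ∃ S : Finset (ℤ × ℤ), (k + 1) ^ 2 / 4 - 1 ≤ S.card ∧
      (∀ e ∈ S, e.1 < e.2 ∧ G.Adj e.1 e.2) ∧
      (∃ x : ℤ, ∀ e ∈ S, e.1 ≤ x ∧ x ≤ e.2) ∧
      ∀ e1 ∈ S, ∀ e2 ∈ S,
        ¬((p : ℤ) ≤ e1.1 - e2.2 ∨ (p : ℤ) ≤ e2.1 - e1.2) := by
  classical
  set c := k - 1 with hc
  have hc1 : 1 ≤ c := by omega
  -- the set of all endpoints of edges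
  let ef : Sym2 ℤ → Finset ℤ := Sym2.lift ⟨fun a b => {a, b}, fun a b => Finset.pair_comm a b⟩
  let V : Finset ℤ := hfin.toFinset.biUnion ef
  have hV : ∀ a b : ℤ, G.Adj a b → a ∈ V ∧ b ∈ V := by
    intro a b hab
    have he : s(a, b) ∈ hfin.toFinset := by simpa using hab
    constructor <;>
      exact Finset.mem_biUnion.2 ⟨_, he, by simp [ef]⟩
  -- bad = not properly (k-1)-colorable
  set Bad : Finset ℤ → Prop :=
    fun A => ¬ ∃ f : ℤ → Fin c, ∀ a ∈ A, ∀ b ∈ A, G.Adj a b → f a ≠ f b with hBad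
  have hBadV : Bad V := by
    rintro ⟨f, hf⟩
    have hcol : G.Colorable c := by
      refine ⟨SimpleGraph.Coloring.mk f ?_⟩
      intro a b hab
      exact hf a (hV a b hab).1 b (hV a b hab).2 hab
    have h1 : G.chromaticNumber ≤ (c : ℕ∞) := hcol.chromaticNumber_le
    have h2 : (k : ℕ∞) ≤ (c : ℕ∞) := le_trans hchi h1
    rw [Nat.cast_le] at h2
    omega
  -- minimal bad set
  have key : ∀ n (A : Finset ℤ), A.card ≤ n → Bad A →
      ∃ B : Finset ℤ, Bad B ∧ ∀ a ∈ B, ¬ Bad (B.erase a) := by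
    intro n
    induction n with
    | zero =>
      intro A hA hbad
      refine ⟨A, hbad, fun a ha => ?_⟩
      have : A = ∅ := Finset.card_eq_zero.mp (Nat.le_zero.mp hA)
      simp [this] at ha
    | succ n ih =>
      intro A hA hbad
      by_cases h : ∀ a ∈ A, ¬ Bad (A.erase a)
      · exact ⟨A, hbad, h⟩
      · simp only [not_forall, not_not, exists_prop] at h
        obtain ⟨a, ha, hbad'⟩ := h
        exact ih _ (by have := Finset.card_erase_of_mem ha; omega) hbad'
  obtain ⟨A, hbadA, hminA⟩ := key V.card V le_rfl hBadV
  -- min degree in A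
  have hdeg : ∀ a ∈ A, c ≤ (A.filter (G.Adj a)).card := by
    intro a ha
    by_contra hlt
    push_neg at hlt
    obtain ⟨f, hf⟩ := not_not.mp (hminA a ha)
    have hcard : ((A.filter (G.Adj a)).image f).card < c :=
      lt_of_le_of_lt Finset.card_image_le hlt
    obtain ⟨m, hm'⟩ : ∃ m : Fin c, m ∉ (A.filter (G.Adj a)).image f := by
      have h0 : 0 < ((A.filter (G.Adj a)).image f)ᶜ.card := by
        rw [Finset.card_compl, Fintype.card_fin]
        omega
      obtain ⟨m, hm⟩ := Finset.card_pos.mp h0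
      exact ⟨m, Finset.mem_compl.mp hm⟩
    refine hbadA ⟨Function.update f a m, ?_⟩
    intro x hx y hy hxy
    rcases eq_or_ne x a with rfl | hxa
    · rcases eq_or_ne y x with rfl | hya
      · exact absurd hxy (G.irrefl)
      · rw [Function.update_self, Function.update_of_ne hya]
        intro hEq
        exact hm' (hEq ▸ Finset.mem_image_of_mem f (Finset.mem_filter.mpr ⟨hy, hxy⟩))
    · rw [Function.update_of_ne hxa]
      rcases eq_or_ne y a with rfl | hya
      · rw [Function.update_self]
        intro hEq
        exact hm' (hEq ▸ Finset.mem_image_of_mem f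
          (Finset.mem_filter.mpr ⟨hx, hxy.symm⟩))
      · rw [Function.update_of_ne hya]
        exact hf x (Finset.mem_erase.mpr ⟨hxa, hx⟩) y (Finset.mem_erase.mpr ⟨hya, hy⟩) hxy
  -- A has at least k elements
  have hAne : A.Nonempty := by
    rcases Finset.eq_empty_or_nonempty A with rfl | h
    · exact absurd ⟨fun _ => ⟨0, hc1⟩, by simp⟩ hbadA
    · exact h
  have hAcard : k ≤ A.card := by
    obtain ⟨a, ha⟩ := hAne
    have hsub : insert a (A.filter (G.Adj a)) ⊆ A := by
      intro x hx
      rcases Finset.mem_insert.mp hx with rfl | hx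
      · exact ha
      · exact (Finset.mem_filter.mp hx).1
    have hnot : a ∉ A.filter (G.Adj a) := by simp [G.irrefl]
    have h1 := Finset.card_le_card hsub
    rw [Finset.card_insert_of_notMem hnot] at h1
    have := hdeg a ha
    omega
  set s := (k + 2) / 2 with hs
  have hsk : s ≤ k := by omega
  have hsA : s ≤ A.card := le_trans hsk hAcard
  have hs1 : s - 1 < A.card := by omega
  set e := A.orderEmbOfFin rfl with he
  set v : ℤ := e ⟨s - 1, hs1⟩ with hv
  set S : Finset ℤ := A.filter (· ≤ v) with hS
  have hvA : v ∈ A := A.orderEmbOfFin_mem rfl _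
  have hvS : v ∈ S := Finset.mem_filter.mpr ⟨hvA, le_refl v⟩
  have hle : ∀ i : Fin A.card, e i ≤ v ↔ (i : ℕ) ≤ s - 1 := by
    intro i
    rw [hv, e.le_iff_le]
    exact Fin.le_def
  -- card S = s
  have hScard : S.card = s := by
    have himg : S = (Finset.univ.filter (fun i : Fin A.card => (i : ℕ) < s)).image
        (fun i => e i) := by
      ext w
      simp only [hS, Finset.mem_filter, Finset.mem_image, Finset.mem_univ, true_and]
      constructor
      · rintro ⟨hwA, hwv⟩
        have hr : w ∈ Set.range e := by rw [he, Finset.range_orderEmbOfFin]; exact hwA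
        obtain ⟨i, rfl⟩ := hr
        have h2 : (i : ℕ) ≤ s - 1 := (hle i).mp hwv
        exact ⟨i, by omega, rfl⟩
      · rintro ⟨i, hi, rfl⟩
        exact ⟨A.orderEmbOfFin_mem rfl _, (hle i).mpr (by omega)⟩
    rw [himg, Finset.card_image_of_injective _ e.injective]
    have hfe : (Finset.univ.filter (fun i : Fin A.card => (i : ℕ) < s)) =
        (Finset.univ : Finset (Fin s)).map (Fin.castLEEmb hsA) := by
      ext i
      simp only [Finset.mem_filter, Finset.mem_univ, true_and, Finset.mem_map]
      constructor
      · intro hi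
        exact ⟨⟨i, hi⟩, Fin.ext rfl⟩
      · rintro ⟨j, rfl⟩
        exact j.2
    rw [hfe, Finset.card_map, Finset.card_univ, Fintype.card_fin]
  -- members of S
  have hSmem : ∀ u ∈ S, u ∈ A ∧ u ≤ v := fun u hu => Finset.mem_filter.mp hu
  -- the edge set
  set T : Finset (ℤ × ℤ) := S.biUnion
    (fun u => (A.filter (fun w => G.Adj u w ∧ v ≤ w)).image (fun w => (u, w))) with hT
  have hTmem : ∀ x ∈ T, x.1 ≤ v ∧ G.Adj x.1 x.2 ∧ v ≤ x.2 := by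
    intro x hx
    obtain ⟨u, hu, hx⟩ := Finset.mem_biUnion.mp hx
    obtain ⟨w, hw, rfl⟩ := Finset.mem_image.mp hx
    obtain ⟨hwA, hadj, hvw⟩ := Finset.mem_filter.mp hw
    exact ⟨(hSmem u hu).2, hadj, hvw⟩
  -- card T
  have hTcard : (k + 1) ^ 2 / 4 - 1 ≤ T.card := by
    have hdisj : ∀ u1 ∈ S, ∀ u2 ∈ S, u1 ≠ u2 → Disjoint
        ((A.filter (fun w => G.Adj u1 w ∧ v ≤ w)).image (fun w => (u1, w)))
        ((A.filter (fun w => G.Adj u2 w ∧ v ≤ w)).image (fun w => (u2, w))) := by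
      intro u1 _ u2 _ hne
      rw [Finset.disjoint_left]
      rintro ⟨x1, x2⟩ h1 h2
      obtain ⟨w1, _, hw1⟩ := Finset.mem_image.mp h1
      obtain ⟨w2, _, hw2⟩ := Finset.mem_image.mp h2
      injection hw1 with ha _
      injection hw2 with hb _
      exact hne (ha.trans hb.symm)
    have himgcard : ∀ u : ℤ, ((A.filter (fun w => G.Adj u w ∧ v ≤ w)).image
        (fun w => (u, w))).card = (A.filter (fun w => G.Adj u w ∧ v ≤ w)).card :=
      fun u => Finset.card_image_of_injective _ (fun a b h => (Prod.ext_iff.mp h).2)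
    -- per-vertex counting: neighbors split around v
    have hbound : ∀ u ∈ S, c ≤ (A.filter (fun w => G.Adj u w ∧ v ≤ w)).card +
        (A.filter (fun w => G.Adj u w ∧ w < v)).card := by
      intro u hu
      have hpart := Finset.card_filter_add_card_filter_not
        (s := A.filter (G.Adj u)) (p := fun w => v ≤ w)
      rw [Finset.filter_filter, Finset.filter_filter] at hpart
      simp only [not_le] at hpart
      have := hdeg u (hSmem u hu).1
      omega
    -- bounds on left neighbors
    have hlt_v : (A.filter (fun w => G.Adj v w ∧ w < v)).card ≤ s - 1 := by
      have hsub : A.filter (fun w => G.Adj v w ∧ w < v) ⊆ S.erase v := by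
        intro w hw
        obtain ⟨hwA, _, hwv⟩ := Finset.mem_filter.mp hw
        exact Finset.mem_erase.mpr ⟨ne_of_lt hwv, Finset.mem_filter.mpr ⟨hwA, le_of_lt hwv⟩⟩
      have := Finset.card_le_card hsub
      rw [Finset.card_erase_of_mem hvS, hScard] at this
      exact this
    have hlt_u : ∀ u ∈ S.erase v, (A.filter (fun w => G.Adj u w ∧ w < v)).card ≤ s - 2 := by
      intro u hu
      obtain ⟨huv, huS⟩ := Finset.mem_erase.mp hu
      have hsub : A.filter (fun w => G.Adj u w ∧ w < v) ⊆ (S.erase v).erase u := by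
        intro w hw
        obtain ⟨hwA, hadj, hwv⟩ := Finset.mem_filter.mp hw
        exact Finset.mem_erase.mpr ⟨hadj.ne', Finset.mem_erase.mpr
          ⟨ne_of_lt hwv, Finset.mem_filter.mpr ⟨hwA, le_of_lt hwv⟩⟩⟩
      have h1 := Finset.card_le_card hsub
      have h2 := Finset.card_erase_le (s := S.erase v) (a := u)
      rw [Finset.card_erase_of_mem hvS, hScard] at h2
      have h3 : ((S.erase v).erase u).card ≤ s - 1 - 1 := by
        rw [Finset.card_erase_of_mem (Finset.mem_erase.mpr ⟨huv, huS⟩),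
          Finset.card_erase_of_mem hvS, hScard]
      omega
    -- sum it up
    have hsum : (k - s) + (s - 1) * (k + 1 - s) ≤
        ∑ u ∈ S, (A.filter (fun w => G.Adj u w ∧ v ≤ w)).card := by
      rw [← Finset.add_sum_erase _ _ hvS]
      have h1 : k - s ≤ (A.filter (fun w => G.Adj v w ∧ v ≤ w)).card := by
        have := hbound v hvS
        have := hlt_v
        omega
      have h2 : (s - 1) * (k + 1 - s) ≤
          ∑ u ∈ S.erase v, (A.filter (fun w => G.Adj u w ∧ v ≤ w)).card := by
        have h3 := Finset.card_nsmul_le_sum (S.erase v)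
          (fun u => (A.filter (fun w => G.Adj u w ∧ v ≤ w)).card) (k + 1 - s)
          (fun u hu => by
            have := hbound u (Finset.mem_of_mem_erase hu)
            have := hlt_u u hu
            omega)
        rwa [Finset.card_erase_of_mem hvS, hScard, smul_eq_mul] at h3
      exact add_le_add h1 h2
    calc (k + 1) ^ 2 / 4 - 1 ≤ (k - s) + (s - 1) * (k + 1 - s) := stmt18_arith k hk
      _ ≤ ∑ u ∈ S, (A.filter (fun w => G.Adj u w ∧ v ≤ w)).card := hsum
      _ = T.card := by rw [hT, Finset.card_biUnion hdisj]; simp only [himgcard]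
  refine ⟨T, hTcard, ?_, ⟨v, ?_⟩, ?_⟩
  · intro x hx
    obtain ⟨h1, h2, h3⟩ := hTmem x hx
    exact ⟨lt_of_le_of_ne (le_trans h1 h3) h2.ne, h2⟩
  · intro x hx
    obtain ⟨h1, h2, h3⟩ := hTmem x hx
    exact ⟨h1, h3⟩
  · intro e1 h1 e2 h2
    obtain ⟨h11, _, h13⟩ := hTmem e1 h1
    obtain ⟨h21, _, h23⟩ := hTmem e2 h2
    have hp' : (1 : ℤ) ≤ (p : ℤ) := by exact_mod_cast hp
    rintro (h | h) <;> omega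
end

section
/- For p ≥ 1 and k ≥ 2, consider the complete graph K_k on vertex set {p, 2p, ..., kp} with the conflict relation where edges (u1,v1), (u2,v2) are conflicting if u1 - v2 ≥ p or u2 - v1 ≥ p. Then the maximum size of a set of pairwise non-conflicting edges equals ⌈(k+1)/2⌉·⌊(k+1)/2⌋ - 1 = ⌊(k+1)²/4⌋ - 1, namely the maximum over i of the number of edges whose span contains the i-th vertex, which is i(k+1-i) - 1. -/
lemma aux1 (k : ℕ) : ((k+1)/2) * (k+1 - (k+1)/2) = (k+1)^2/4 := by
  have hdm := Nat.div_add_mod (k+1) 2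
  set q := (k+1)/2 with hq
  set r := (k+1)%2 with hr
  have hn : k + 1 = 2*q + r := by omega
  have hr2 : r < 2 := Nat.mod_lt _ (by norm_num)
  have hsq : (k+1)^2 = 4*(q*q+q*r) + r*r := by rw [hn]; ring
  have h1 : k + 1 - q = q + r := by omega
  rw [h1, hsq]
  have h2 : q*(q+r) = q*q+q*r := by ring
  rw [h2]
  have h3 : r*r < 4 := by nlinarith
  omega

lemma aux2 (k a : ℕ) (h2 : a ≤ k) : a * (k+1-a) ≤ (k+1)^2/4 := by
  rw [Nat.le_div_iff_mul_le (by norm_num)]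
  obtain ⟨b, hb⟩ : ∃ b, k + 1 = a + b := ⟨k+1-a, by omega⟩
  have h3 : k + 1 - a = b := by omega
  rw [h3, hb]
  nlinarith [two_mul_le_add_sq a b]

/-- For `p ≥ 1`, `k ≥ 2`, in the complete graph on `{p, 2p, …, kp}` with conflicts
`u1 - v2 ≥ p ∨ u2 - v1 ≥ p`, the maximum size of a set of pairwise non-conflicting
edges equals `⌊(k+1)²/4⌋ - 1`. -/
theorem stmt19 (p k : ℕ) (hp : 1 ≤ p) (hk : 2 ≤ k) :
    IsGreatest {m : ℕ | ∃ S : Finset (ℤ × ℤ),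
      (∀ e ∈ S, ∃ i j : ℤ, 1 ≤ i ∧ i < j ∧ j ≤ (k : ℤ) ∧ e = (i * p, j * p)) ∧
      (∀ e1 ∈ S, ∀ e2 ∈ S, e1 ≠ e2 →
        ¬((p : ℤ) ≤ e1.1 - e2.2 ∨ (p : ℤ) ≤ e2.1 - e1.2)) ∧
      S.card = m} ((k + 1) ^ 2 / 4 - 1) := by
  constructor
  ·   have hp' : (0:ℤ) < p := by exact_mod_cast hp
      set m : ℕ := (k+1)/2 with hm
      have hm1 : 1 ≤ m := by omega
      have hmk : m ≤ k := by omega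
      set T : Finset (ℤ × ℤ) := (Finset.Icc (1:ℤ) m ×ˢ Finset.Icc (m:ℤ) k).erase ((m:ℤ), (m:ℤ)) with hT
      have hTmem : ∀ q ∈ T, 1 ≤ q.1 ∧ q.1 ≤ (m:ℤ) ∧ (m:ℤ) ≤ q.2 ∧ q.2 ≤ k ∧ q.1 < q.2 := by
        intro q hq
        rw [hT, Finset.mem_erase, Finset.mem_product, Finset.mem_Icc, Finset.mem_Icc] at hq
        obtain ⟨hne, ⟨h1, h2⟩, h3, h4⟩ := hq
        refine ⟨h1, h2, h3, h4, ?_⟩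
        rcases lt_or_eq_of_le h2 with h | h
        · exact lt_of_lt_of_le h h3
        · rcases lt_or_eq_of_le h3 with h' | h'
          · omega
          · exact absurd (by ext <;> simp <;> omega : q = ((m:ℤ),(m:ℤ))) hne
      refine ⟨T.image (fun q => (q.1 * p, q.2 * p)), ?_, ?_, ?_⟩
      · intro e he
        obtain ⟨q, hq, rfl⟩ := Finset.mem_image.mp he
        obtain ⟨h1, h2, h3, h4, h5⟩ := hTmem q hq
        exact ⟨q.1, q.2, h1, h5, h4, rfl⟩
      · intro e1 he1 e2 he2 hne
        obtain ⟨q1, hq1, rfl⟩ := Finset.mem_image.mp he1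
        obtain ⟨q2, hq2, rfl⟩ := Finset.mem_image.mp he2
        obtain ⟨a1, b1, c1, d1, e1⟩ := hTmem q1 hq1
        obtain ⟨a2, b2, c2, d2, e2⟩ := hTmem q2 hq2
        push_neg
        constructor <;> simp only <;> nlinarith
      · rw [Finset.card_image_of_injective _ (by
          intro a b hab
          simp only [Prod.mk.injEq] at hab
          have h1 : a.1 = b.1 := by
            have := hab.1; exact mul_right_cancel₀ (ne_of_gt hp') this
          have h2 : a.2 = b.2 := by
            have := hab.2; exact mul_right_cancel₀ (ne_of_gt hp') this
          exact Prod.ext h1 h2)]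
        rw [hT, Finset.card_erase_of_mem (by
          rw [Finset.mem_product, Finset.mem_Icc, Finset.mem_Icc]
          simp only [Prod.fst, Prod.snd]
          refine ⟨⟨by exact_mod_cast hm1, le_refl _⟩, le_refl _, by exact_mod_cast hmk⟩)]
        rw [Finset.card_product, Int.card_Icc, Int.card_Icc]
        have e1 : ((m:ℤ) + 1 - 1).toNat = m := by omega
        have e2 : ((k:ℤ) + 1 - m).toNat = k + 1 - m := by omega
        rw [e1, e2, aux1 k]
  ·   have hp' : (0:ℤ) < p := by exact_mod_cast hp
      rintro n ⟨S, hS1, hS2, rfl⟩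
      rcases S.eq_empty_or_nonempty with rfl | hne
      · simp
      obtain ⟨e0, he0, hmax⟩ := S.exists_max_image (fun e => e.1) hne
      obtain ⟨i0, j0, hi0, hij0, hj0, he0eq⟩ := hS1 e0 he0
      have key : ∀ e ∈ S, ∃ i j : ℤ, 1 ≤ i ∧ i < j ∧ j ≤ k ∧ e = (i*p, j*p) ∧ i ≤ i0 ∧ i0 ≤ j := by
        intro e he
        obtain ⟨i, j, h1, h2, h3, rfl⟩ := hS1 e he
        refine ⟨i, j, h1, h2, h3, rfl, ?_, ?_⟩
        · have h := hmax _ he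
          rw [he0eq] at h
          simp only at h
          exact le_of_mul_le_mul_right h hp'
        · by_cases h : ((i*(p:ℤ), j*(p:ℤ)) : ℤ × ℤ) = e0
          · rw [he0eq] at h
            simp only [Prod.mk.injEq] at h
            have : i = i0 := mul_right_cancel₀ (ne_of_gt hp') h.1
            omega
          · have h2' := hS2 e0 he0 _ he (Ne.symm h)
            push_neg at h2'
            have := h2'.1
            rw [he0eq] at this
            simp only at this
            nlinarith
      -- map to index pairs
      set f : ℤ × ℤ → ℤ × ℤ := fun e => (e.1 / p, e.2 / p) with hf
      have hfe : ∀ i j : ℤ, f (i * p, j * p) = (i, j) := by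
        intro i j
        simp only [hf]
        rw [Int.mul_ediv_cancel _ (ne_of_gt hp'), Int.mul_ediv_cancel _ (ne_of_gt hp')]
      have hinj : Set.InjOn f S := by
        intro a ha b hb hab
        obtain ⟨i1, j1, _, _, _, rfl, _, _⟩ := key a ha
        obtain ⟨i2, j2, _, _, _, rfl, _, _⟩ := key b hb
        rw [hfe, hfe] at hab
        simp only [Prod.mk.injEq] at hab ⊢
        exact ⟨by rw [hab.1], by rw [hab.2]⟩
      have hcard : S.card = (S.image f).card := (Finset.card_image_of_injOn hinj).symm
      have hsub : S.image f ⊆ (Finset.Icc (1:ℤ) i0 ×ˢ Finset.Icc i0 (k:ℤ)).erase (i0, i0) := by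
        intro q hq
        obtain ⟨e, he, rfl⟩ := Finset.mem_image.mp hq
        obtain ⟨i, j, h1, h2, h3, rfl, h4, h5⟩ := key e he
        rw [hfe]
        rw [Finset.mem_erase, Finset.mem_product, Finset.mem_Icc, Finset.mem_Icc]
        refine ⟨?_, ⟨h1, h4⟩, h5, h3⟩
        intro hcontra
        simp only [Prod.mk.injEq] at hcontra
        omega
      have hle := Finset.card_le_card hsub
      rw [Finset.card_erase_of_mem (by
          rw [Finset.mem_product, Finset.mem_Icc, Finset.mem_Icc]
          simp only [Prod.fst, Prod.snd]
          refine ⟨⟨hi0, le_refl _⟩, le_refl _, by omega⟩),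
        Finset.card_product, Int.card_Icc, Int.card_Icc] at hle
      set a := i0.toNat with hA
      have haeq : (a : ℤ) = i0 := Int.toNat_of_nonneg (by omega)
      have e1 : ((i0:ℤ) + 1 - 1).toNat = a := by omega
      have e2 : ((k:ℤ) + 1 - i0).toNat = k + 1 - a := by omega
      rw [e1, e2] at hle
      have hak : a ≤ k := by omega
      have := aux2 k a hak
      omega
end
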